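/- arXiv:2205.13710 — 2 statements merged into one kernel-verified Lean document; each statement's English description precedes it below -/
import Mathlib

section
/- The Rényi divergence of order α > 1 is jointly quasi-convex: for probability measures μ, ν, μ', ν' on a measurable space and λ ∈ [0,1], D_α(λμ + (1−λ)μ' ‖ λν + (1−λ)ν') ≤ max(D_α(μ ‖ ν), D_α(μ' ‖ ν')). -/
/-!
For `α > 1`, `renyiDiv α μ ν` is the increasing function `(α - 1)⁻¹ log` of the Hellinger
integral `H_α(μ, ν) = ∫ (dμ/dν)^α dν`. The Hellinger integral is positively homogeneous and
subadditive in the pair `(μ, ν)`, hence jointly convex, so on the mixtures it is at most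
`max (H_α(μ, ν)) (H_α(μ', ν'))`. Mixtures of probability measures are nonzero, so `H_α` of the
mixtures is positive and its logarithm is not a junk value.
-/

open MeasureTheory ProbabilityTheory
open scoped NNReal ENNReal

open scoped Classical in
/-- Rényi divergence of order `α`: `(α-1)⁻¹ log ∫ (dμ/dν)^α dν` for `α ≠ 1` (with the
KL divergence as the `α = 1` case), and `⊤` when `μ` is not absolutely continuous w.r.t. `ν`
or the defining integral is infinite. -/
noncomputable def renyiDiv {Ω : Type*} [MeasurableSpace Ω] (α : ℝ) (μ ν : Measure Ω) : EReal :=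
  if μ ≪ ν then
    if α = 1 then ((∫ x, Real.log ((μ.rnDeriv ν x).toReal) ∂μ : ℝ) : EReal)
    else if (∫⁻ x, (μ.rnDeriv ν x) ^ α ∂ν) = ∞ then ⊤
    else (((α - 1)⁻¹ * Real.log ((∫⁻ x, (μ.rnDeriv ν x) ^ α ∂ν).toReal) : ℝ) : EReal)
  else ⊤

namespace MeasureTheory

variable {Ω : Type*} [MeasurableSpace Ω] {α : ℝ} {μ ν μ' ν' : Measure Ω}

noncomputable def hellingerIntegral (α : ℝ) (μ ν : Measure Ω) : ℝ≥0∞ :=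
  ∫⁻ x, (μ.rnDeriv ν x) ^ α ∂ν

lemma renyiDiv_of_not_absolutelyContinuous (h : ¬ μ ≪ ν) : renyiDiv α μ ν = ⊤ := by
  rw [renyiDiv, if_neg h]

lemma renyiDiv_of_hellingerIntegral_eq_top (hμν : μ ≪ ν) (hα : α ≠ 1)
    (h : hellingerIntegral α μ ν = ∞) : renyiDiv α μ ν = ⊤ := by
  rw [hellingerIntegral] at h
  rw [renyiDiv, if_pos hμν, if_neg hα, if_pos h]

lemma renyiDiv_of_hellingerIntegral_ne_top (hμν : μ ≪ ν) (hα : α ≠ 1)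
    (h : hellingerIntegral α μ ν ≠ ∞) :
    renyiDiv α μ ν = (((α - 1)⁻¹ * Real.log (hellingerIntegral α μ ν).toReal : ℝ) : EReal) := by
  rw [hellingerIntegral] at h ⊢
  rw [renyiDiv, if_pos hμν, if_neg hα, if_neg h]

lemma hellingerIntegral_ne_zero [μ.HaveLebesgueDecomposition ν] (hμν : μ ≪ ν) (hμ : μ ≠ 0)
    (hα : 0 < α) : hellingerIntegral α μ ν ≠ 0 := by
  intro h
  have h_rpow : ∀ᵐ x ∂ν, (μ.rnDeriv ν x) ^ α = 0 :=
    (lintegral_eq_zero_iff ((μ.measurable_rnDeriv ν).pow_const α)).mp h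
  have h_rnDeriv : ∀ᵐ x ∂ν, μ.rnDeriv ν x = 0 := by
    filter_upwards [h_rpow] with x hx
    exact (ENNReal.rpow_eq_zero_iff_of_pos hα).mp hx
  have h_univ : μ Set.univ = 0 := by
    rw [← Measure.lintegral_rnDeriv hμν, lintegral_congr_ae h_rnDeriv, lintegral_zero]
  exact hμ (Measure.measure_univ_eq_zero.mp h_univ)

lemma renyiDiv_le_renyiDiv_of_hellingerIntegral_le (hα : 1 < α) (hμν : μ ≪ ν)
    (h₀ : hellingerIntegral α μ ν ≠ 0) (h : hellingerIntegral α μ ν ≤ hellingerIntegral α μ' ν') :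
    renyiDiv α μ ν ≤ renyiDiv α μ' ν' := by
  by_cases hμν' : μ' ≪ ν'
  swap
  · simp [renyiDiv_of_not_absolutelyContinuous hμν']
  by_cases h_top' : hellingerIntegral α μ' ν' = ∞
  · simp [renyiDiv_of_hellingerIntegral_eq_top hμν' hα.ne' h_top']
  have h_top : hellingerIntegral α μ ν ≠ ∞ := ne_top_of_le_ne_top h_top' h
  rw [renyiDiv_of_hellingerIntegral_ne_top hμν hα.ne' h_top,
    renyiDiv_of_hellingerIntegral_ne_top hμν' hα.ne' h_top', EReal.coe_le_coe_iff]
  gcongr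
  exact ENNReal.toReal_pos h₀ h_top

lemma hellingerIntegral_smul [IsFiniteMeasure μ] [μ.HaveLebesgueDecomposition ν] (c : ℝ≥0) :
    hellingerIntegral α (c • μ) (c • ν) = c * hellingerIntegral α μ ν := by
  rcases eq_or_ne c 0 with rfl | hc₀
  · simp [hellingerIntegral]
  rw [hellingerIntegral, lintegral_smul_measure, ENNReal.smul_def, smul_eq_mul,
    lintegral_congr_ae ((μ.rnDeriv_smul_same ν hc₀).mono fun x hx => by rw [hx]),
    hellingerIntegral]

/-- With respect to `ν = ν₁ + ν₂`, the density of `μ₁ + μ₂` is `p f + q g` where `p + q = 1`,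
so convexity of `x ↦ x ^ α` bounds its `α`-th power pointwise by `p f ^ α + q g ^ α`. -/
lemma hellingerIntegral_add_le {μ₁ μ₂ ν₁ ν₂ : Measure Ω} [SigmaFinite μ₁] [SigmaFinite μ₂]
    [SigmaFinite ν₁] [SigmaFinite ν₂] (h₁ : μ₁ ≪ ν₁) (h₂ : μ₂ ≪ ν₂) (hα : 1 ≤ α) :
    hellingerIntegral α (μ₁ + μ₂) (ν₁ + ν₂) ≤
      hellingerIntegral α μ₁ ν₁ + hellingerIntegral α μ₂ ν₂ := by
  set ν := ν₁ + ν₂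
  set p := ν₁.rnDeriv ν
  set q := ν₂.rnDeriv ν
  set f := μ₁.rnDeriv ν₁
  set g := μ₂.rnDeriv ν₂
  have h_weights : ∀ᵐ x ∂ν, p x + q x = 1 := by
    filter_upwards [Measure.rnDeriv_add' ν₁ ν₂ ν, Measure.rnDeriv_self ν] with x h_add h_self
    rw [← Pi.add_apply, ← h_add, h_self]
  have h_density : (μ₁ + μ₂).rnDeriv ν =ᵐ[ν] fun x => p x * f x + q x * g x := by
    filter_upwards [Measure.rnDeriv_add' μ₁ μ₂ ν, Measure.rnDeriv_mul_rnDeriv h₁,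
      Measure.rnDeriv_mul_rnDeriv h₂] with x h_add hf hg
    rw [h_add, Pi.add_apply, ← hf, ← hg, Pi.mul_apply, Pi.mul_apply, mul_comm (f x),
      mul_comm (g x)]
  have h_pointwise : ∀ᵐ x ∂ν, ((μ₁ + μ₂).rnDeriv ν x) ^ α ≤ p x * f x ^ α + q x * g x ^ α := by
    filter_upwards [h_weights, h_density] with x hw hd
    rw [hd]
    exact ENNReal.rpow_arith_mean_le_arith_mean2_rpow _ _ _ _ hw hα
  have hf : Measurable fun x => f x ^ α := (μ₁.measurable_rnDeriv ν₁).pow_const α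
  have hg : Measurable fun x => g x ^ α := (μ₂.measurable_rnDeriv ν₂).pow_const α
  calc hellingerIntegral α (μ₁ + μ₂) ν
      ≤ ∫⁻ x, p x * f x ^ α + q x * g x ^ α ∂ν := lintegral_mono_ae h_pointwise
    _ = ∫⁻ x, p x * f x ^ α ∂ν + ∫⁻ x, q x * g x ^ α ∂ν :=
        lintegral_add_left ((ν₁.measurable_rnDeriv ν).mul hf) _
    _ = hellingerIntegral α μ₁ ν₁ + hellingerIntegral α μ₂ ν₂ := by
        rw [lintegral_rnDeriv_mul (Measure.AbsolutelyContinuous.add_right .rfl ν₂)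
            hf.aemeasurable,
          lintegral_rnDeriv_mul (Measure.AbsolutelyContinuous.add_right' .rfl ν₁)
            hg.aemeasurable]
        rfl

lemma hellingerIntegral_mixture_le [IsFiniteMeasure μ] [IsFiniteMeasure μ'] [SigmaFinite ν]
    [SigmaFinite ν'] (hμν : μ ≪ ν) (hμν' : μ' ≪ ν') (hα : 1 ≤ α) {a b : ℝ≥0} (hab : a + b = 1) :
    hellingerIntegral α (a • μ + b • μ') (a • ν + b • ν') ≤
      max (hellingerIntegral α μ ν) (hellingerIntegral α μ' ν') :=
  calc _ ≤ hellingerIntegral α (a • μ) (a • ν) + hellingerIntegral α (b • μ') (b • ν') :=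
        hellingerIntegral_add_le (hμν.smul a) (hμν'.smul b) hα
    _ = a * hellingerIntegral α μ ν + b * hellingerIntegral α μ' ν' := by
        rw [hellingerIntegral_smul, hellingerIntegral_smul]
    _ ≤ a * max (hellingerIntegral α μ ν) (hellingerIntegral α μ' ν') +
          b * max (hellingerIntegral α μ ν) (hellingerIntegral α μ' ν') := by
        gcongr
        exacts [le_max_left _ _, le_max_right _ _]
    _ = _ := by rw [← add_mul, ← ENNReal.coe_add, hab, ENNReal.coe_one, one_mul]

end MeasureTheory

open MeasureTheory

/-- **Joint quasi-convexity of the Rényi divergence** (order `α > 1`): the divergence between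
mixtures `λμ + (1-λ)μ'` and `λν + (1-λ)ν'` is at most the max of the componentwise divergences. -/
theorem renyiDiv_quasiConvex {Ω : Type*} [MeasurableSpace Ω]
    (μ ν μ' ν' : Measure Ω) [IsProbabilityMeasure μ] [IsProbabilityMeasure ν]
    [IsProbabilityMeasure μ'] [IsProbabilityMeasure ν']
    (α lam : ℝ) (hα : 1 < α) (hlam : lam ∈ Set.Icc (0 : ℝ) 1) :
    renyiDiv α (ENNReal.ofReal lam • μ + ENNReal.ofReal (1 - lam) • μ')
        (ENNReal.ofReal lam • ν + ENNReal.ofReal (1 - lam) • ν') ≤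
      max (renyiDiv α μ ν) (renyiDiv α μ' ν') := by
  set a := lam.toNNReal
  set b := (1 - lam).toNNReal
  change renyiDiv α (a • μ + b • μ') (a • ν + b • ν') ≤ _
  have hab : a + b = 1 := by
    rw [← Real.toNNReal_add hlam.1 (by linarith [hlam.2]), add_sub_cancel, Real.toNNReal_one]
  by_cases hμν : μ ≪ ν
  swap
  · simp [renyiDiv_of_not_absolutelyContinuous hμν]
  by_cases hμν' : μ' ≪ ν'
  swap
  · simp [renyiDiv_of_not_absolutelyContinuous hμν']
  have h_mix_ac : a • μ + b • μ' ≪ a • ν + b • ν' := (hμν.smul a).add (hμν'.smul b)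
  have h_mix_ne : a • μ + b • μ' ≠ 0 := by
    intro h
    simpa [← ENNReal.coe_add, hab] using congrArg (fun m : Measure Ω => m Set.univ) h
  have h_le := hellingerIntegral_mixture_le hμν hμν' hα.le hab
  have h_mix_ne_zero := hellingerIntegral_ne_zero h_mix_ac h_mix_ne (zero_lt_one.trans hα)
  rcases le_total (hellingerIntegral α μ ν) (hellingerIntegral α μ' ν') with h | h
  · exact (renyiDiv_le_renyiDiv_of_hellingerIntegral_le hα h_mix_ac h_mix_ne_zero
      (h_le.trans_eq (max_eq_right h))).trans (le_max_right _ _)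
  · exact (renyiDiv_le_renyiDiv_of_hellingerIntegral_le hα h_mix_ac h_mix_ne_zero
      (h_le.trans_eq (max_eq_left h))).trans (le_max_left _ _)
end

section
/- If an algorithm satisfies (α, ε_α)-Rényi differential privacy for some α > 1, then it satisfies (ε_δ, δ)-differential privacy for every δ ∈ (0,1) with ε_δ = ε_α + log(1/δ)/(α−1). Equivalently: if D_α(μ ‖ ν) ≤ ε_α for probability measures μ, ν, then for every measurable set S, μ(S) ≤ e^{ε_α + log(1/δ)/(α−1)} ν(S) + δ. -/
/-!
Split `S` along the level set `{dμ/dν ≤ t}`: on it `μ ≤ t ν`. Off it, since `μ = (dμ/dν) ν`,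
Markov's inequality gives `t^(α-1) μ {t < dμ/dν} ≤ ∫ (dμ/dν)^α dν ≤ exp ((α-1) ε_α)`, and
`t = exp (ε_α + log (1/δ)/(α-1))` is the threshold with `t^(α-1) = exp ((α-1) ε_α) / δ`.
-/

open MeasureTheory ProbabilityTheory
open scoped NNReal ENNReal

namespace MeasureTheory.Measure

variable {Ω : Type*} [MeasurableSpace Ω] {μ ν : Measure Ω}
  [μ.HaveLebesgueDecomposition ν] [SFinite ν]

lemma measure_inter_rnDeriv_le_le (hμν : μ ≪ ν) (S : Set Ω) (T : ℝ≥0∞) :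
    μ (S ∩ {x | μ.rnDeriv ν x ≤ T}) ≤ T * ν S := by
  rw [← setLIntegral_rnDeriv hμν]
  calc ∫⁻ x in S ∩ {x | μ.rnDeriv ν x ≤ T}, μ.rnDeriv ν x ∂ν
      ≤ ∫⁻ _ in S ∩ {x | μ.rnDeriv ν x ≤ T}, T ∂ν :=
        setLIntegral_mono measurable_const fun _ hx ↦ hx.2
    _ = T * ν (S ∩ {x | μ.rnDeriv ν x ≤ T}) := setLIntegral_const _ _
    _ ≤ T * ν S := by gcongr; exact Set.inter_subset_left

lemma measure_le_mul_add_measure_lt_rnDeriv (hμν : μ ≪ ν) (S : Set Ω) (T : ℝ≥0∞) :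
    μ S ≤ T * ν S + μ {x | T < μ.rnDeriv ν x} :=
  calc μ S ≤ μ (S ∩ {x | μ.rnDeriv ν x ≤ T}) + μ (S \ {x | μ.rnDeriv ν x ≤ T}) :=
        measure_le_inter_add_sdiff μ S _
    _ ≤ T * ν S + μ {x | T < μ.rnDeriv ν x} := by
        gcongr
        · exact measure_inter_rnDeriv_le_le hμν S T
        · exact fun x hx ↦ lt_of_not_ge (Set.notMem_ofPred_iff.mp hx.2)

lemma rpow_mul_measure_lt_rnDeriv_le_lintegral (hμν : μ ≪ ν) {α : ℝ} (hα : 1 ≤ α)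
    (T : ℝ≥0∞) :
    T ^ (α - 1) * μ {x | T < μ.rnDeriv ν x} ≤ ∫⁻ x, μ.rnDeriv ν x ^ α ∂ν := by
  have hf : Measurable (μ.rnDeriv ν) := μ.measurable_rnDeriv ν
  rw [← setLIntegral_rnDeriv hμν, ← lintegral_const_mul _ hf]
  calc ∫⁻ x in {x | T < μ.rnDeriv ν x}, T ^ (α - 1) * μ.rnDeriv ν x ∂ν
      ≤ ∫⁻ x in {x | T < μ.rnDeriv ν x}, μ.rnDeriv ν x ^ α ∂ν := by
        refine setLIntegral_mono (hf.pow_const α) fun x hx ↦ ?_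
        calc T ^ (α - 1) * μ.rnDeriv ν x
            ≤ μ.rnDeriv ν x ^ (α - 1) * μ.rnDeriv ν x := by
              gcongr
              exact hx.le
          _ = μ.rnDeriv ν x ^ α := by
              nth_rw 2 [← ENNReal.rpow_one (μ.rnDeriv ν x)]
              rw [← ENNReal.rpow_add_of_nonneg _ _ (sub_nonneg.mpr hα) zero_le_one,
                sub_add_cancel]
    _ ≤ ∫⁻ x, μ.rnDeriv ν x ^ α ∂ν := setLIntegral_le_lintegral _ _

end MeasureTheory.Measure

section renyiDiv

variable {Ω : Type*} [MeasurableSpace Ω] {μ ν : Measure Ω} {α ε : ℝ}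

lemma absolutelyContinuous_of_renyiDiv_le (h : renyiDiv α μ ν ≤ (ε : EReal)) : μ ≪ ν := by
  by_contra hμν
  rw [renyiDiv, if_neg hμν] at h
  exact EReal.coe_ne_top ε (top_le_iff.mp h)

lemma lintegral_rnDeriv_rpow_le_of_renyiDiv_le (hα : 1 < α)
    (h : renyiDiv α μ ν ≤ (ε : EReal)) :
    ∫⁻ x, μ.rnDeriv ν x ^ α ∂ν ≤ ENNReal.ofReal (Real.exp ((α - 1) * ε)) := by
  rw [renyiDiv, if_pos (absolutelyContinuous_of_renyiDiv_le h), if_neg hα.ne'] at h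
  split_ifs at h with hI
  · exact absurd (top_le_iff.mp h) (EReal.coe_ne_top ε)
  have hlog : Real.log (∫⁻ x, μ.rnDeriv ν x ^ α ∂ν).toReal ≤ (α - 1) * ε := by
    rw [← inv_mul_le_iff₀ (sub_pos.mpr hα)]
    exact EReal.coe_le_coe_iff.mp h
  rw [← ENNReal.ofReal_toReal hI]
  gcongr
  rcases ENNReal.toReal_nonneg.eq_or_lt with h0 | hpos
  · rw [← h0]
    positivity
  · exact (Real.log_le_iff_le_exp hpos).mp hlog

lemma ofReal_exp_rpow_sub_one {δ : ℝ} (hα : 1 < α) (hδ : 0 < δ) :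
    ENNReal.ofReal (Real.exp (ε + Real.log (1 / δ) / (α - 1))) ^ (α - 1)
      = ENNReal.ofReal (Real.exp ((α - 1) * ε) / δ) := by
  rw [ENNReal.ofReal_rpow_of_pos (Real.exp_pos _), ← Real.exp_mul,
    show (ε + Real.log (1 / δ) / (α - 1)) * (α - 1) = (α - 1) * ε + Real.log (1 / δ) by
      field_simp [(sub_pos.mpr hα).ne'],
    Real.exp_add, Real.exp_log (by positivity), mul_one_div]

lemma measure_lt_rnDeriv_le_of_renyiDiv_le [μ.HaveLebesgueDecomposition ν] [SFinite ν]
    {δ : ℝ} (hα : 1 < α) (hδ : 0 < δ) (h : renyiDiv α μ ν ≤ (ε : EReal)) :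
    μ {x | ENNReal.ofReal (Real.exp (ε + Real.log (1 / δ) / (α - 1))) < μ.rnDeriv ν x}
      ≤ ENNReal.ofReal δ := by
  have hmarkov := (Measure.rpow_mul_measure_lt_rnDeriv_le_lintegral
    (absolutelyContinuous_of_renyiDiv_le h) hα.le
    (ENNReal.ofReal (Real.exp (ε + Real.log (1 / δ) / (α - 1))))).trans
    (lintegral_rnDeriv_rpow_le_of_renyiDiv_le hα h)
  rw [ofReal_exp_rpow_sub_one hα hδ] at hmarkov
  have hC : 0 < Real.exp ((α - 1) * ε) := Real.exp_pos _
  calc _ ≤ ENNReal.ofReal (Real.exp ((α - 1) * ε))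
        / ENNReal.ofReal (Real.exp ((α - 1) * ε) / δ) := by
        rw [ENNReal.le_div_iff_mul_le (by simp [hC, hδ]) (by simp), mul_comm]
        exact hmarkov
    _ = ENNReal.ofReal δ := by
        rw [← ENNReal.ofReal_div_of_pos (by positivity), div_div_cancel₀ hC.ne']

end renyiDiv

/-- **RDP-to-DP conversion**: if `D_α(μ‖ν) ≤ ε_α` for some `α > 1`, then for every
`δ ∈ (0,1)` and every measurable set `S`,
`μ(S) ≤ exp(ε_α + log(1/δ)/(α-1)) · ν(S) + δ`. -/
theorem rdp_to_dp {Ω : Type*} [MeasurableSpace Ω]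
    (μ ν : Measure Ω) [IsProbabilityMeasure μ] [IsProbabilityMeasure ν]
    (α εα δ : ℝ) (hα : 1 < α) (hδ : δ ∈ Set.Ioo (0 : ℝ) 1)
    (h : renyiDiv α μ ν ≤ (εα : EReal)) :
    ∀ S : Set Ω, MeasurableSet S →
      μ S ≤ ENNReal.ofReal (Real.exp (εα + Real.log (1 / δ) / (α - 1))) * ν S
        + ENNReal.ofReal δ := by
  intro S _
  calc μ S ≤ _ * ν S + μ {x | _ < μ.rnDeriv ν x} :=
        Measure.measure_le_mul_add_measure_lt_rnDeriv (absolutelyContinuous_of_renyiDiv_le h) S _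
    _ ≤ _ := by grw [measure_lt_rnDeriv_le_of_renyiDiv_le hα hδ.1 h]
end
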